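/- Let b be a prime, α ≥ 2 an integer, λ > 1/(2α) a real number, and n ∈ ℕ. Then ∑_{k ∈ E_b, b^n | k} b^{−2λ μ_α(⌊k/b⌋)} ≤ A_{α,b,λ,2} / b^{4λn}, where A_{α,b,λ,2} = (1/(b−1)) ∑_{v=2}^{α−1} ∏_{i=1}^{v} (b^{2λ}(b−1)/(b^{2λi} − 1)) + (b^{2λ}/(b^{2λα} − b)) ∏_{i=1}^{α−1} (b^{2λ}(b−1)/(b^{2λi} − 1)). -/

import Mathlib

/-!
Put `m = k / b` and `x = b^{-2λ}`; the sum becomes `∑ x^{μ_α(m)}` over `m ∈ E_b` with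
`b^{n-1} ∣ m`. Group these `m` by the set `T` of positions of their `min(v, α)` leading nonzero
digits, so that `μ_α(m) = ∑_{p ∈ T} (p + 1)`. As the digit sum is `≡ 0 (mod b)`, `|T| ≥ 2` and
the digit at the least position `t` of `T` is determined by the other digits. Hence a class with
`|T| < α` (then `T` carries all nonzero digits) has at most `(b-1)^{|T|-1}` members, and a class
with `|T| = α` at most `(b-1)^{α-1} b^{t-n+1}`, the digits at positions `n-1, …, t-1` being free.
Summing `x^{∑(p+1)}` over `v`-sets of positions `≥ M` gives at most `x^{vM} ∏_{i ≤ v} x^i/(1-x^i)`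
(peel off the least element and sum a geometric series); in the top class the extra factor `b^t`
turns the ratio into `b x^α`, which is `< 1` since `λ > 1/(2α)`.
-/

open MeasureTheory Finset

noncomputable section

/-- The `b`-adic digit sum `δ_b(k)`. -/
def bdelta (b k : ℕ) : ℕ := (Nat.digits b k).sum

/-- `k ∈ E_b`, i.e. `k ≥ 1` and `δ_b(k) ≡ 0 (mod b)`. -/
def ebMem (b k : ℕ) : Prop := k ≠ 0 ∧ bdelta b k % b = 0

/-- The set of `0`-indexed positions of the nonzero `b`-adic digits of `k`. -/
def digitSet (b k : ℕ) : Finset ℕ := (Finset.range (k + 1)).filter fun i => k / b ^ i % b ≠ 0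

/-- `μ_α(k) = a_1 + ⋯ + a_{min(v,α)}`, the sum of the `min(v,α)` largest exponents
(counted from `1`) of the nonzero `b`-adic digits of `k`; `μ_α(0) = 0`. -/
def mua (b α k : ℕ) : ℕ :=
  ∑ i ∈ (digitSet b k).filter fun i => ((digitSet b k).filter fun j => i < j).card < α, (i + 1)

/-- The constant `A_{α,b,λ,1}`. -/
def Aone (b α : ℕ) (l : ℝ) : ℝ :=
  ((b : ℝ) / ((b : ℝ) - 1)) *
    ((∑ v ∈ Finset.Icc 1 (α - 1), ∏ i ∈ Finset.Icc 1 v,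
        (((b : ℝ) - 1) / ((b : ℝ) ^ (2 * l * i) - 1)))
      + (((b : ℝ) ^ (2 * l * α) - 1) / ((b : ℝ) ^ (2 * l * α) - b)) *
          ∏ i ∈ Finset.Icc 1 α, (((b : ℝ) - 1) / ((b : ℝ) ^ (2 * l * i) - 1)))

/-- The constant `A_{α,b,λ,2}`. -/
def Atwo (b α : ℕ) (l : ℝ) : ℝ :=
  (1 / ((b : ℝ) - 1)) *
      (∑ v ∈ Finset.Icc 2 (α - 1), ∏ i ∈ Finset.Icc 1 v,
        ((b : ℝ) ^ (2 * l) * ((b : ℝ) - 1) / ((b : ℝ) ^ (2 * l * i) - 1)))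
    + ((b : ℝ) ^ (2 * l) / ((b : ℝ) ^ (2 * l * α) - b)) *
        ∏ i ∈ Finset.Icc 1 (α - 1),
          ((b : ℝ) ^ (2 * l) * ((b : ℝ) - 1) / ((b : ℝ) ^ (2 * l * i) - 1))

namespace Eb

def digit (b i m : ℕ) : ℕ := m / b ^ i % b

variable {b : ℕ}

lemma digit_lt (hb : 0 < b) (i m : ℕ) : digit b i m < b := Nat.mod_lt _ hb

@[simp]
lemma digit_zero_right (i : ℕ) : digit b i 0 = 0 := by simp [digit]

lemma digit_zero_left (m : ℕ) : digit b 0 m = m % b := by simp [digit]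

lemma digit_div (i m : ℕ) : digit b i (m / b) = digit b (i + 1) m := by
  simp [digit, Nat.div_div_eq_div_mul, pow_succ']

lemma digit_eq_zero_of_lt_pow {i m : ℕ} (h : m < b ^ i) : digit b i m = 0 := by
  simp [digit, Nat.div_eq_of_lt h]

lemma digit_eq_zero_of_pow_dvd {N i m : ℕ} (h : b ^ N ∣ m) (hi : i < N) : digit b i m = 0 :=
  Nat.mod_eq_zero_of_dvd <| Nat.dvd_div_of_mul_dvd <|
    (pow_succ b i ▸ pow_dvd_pow b hi).trans h

theorem eq_of_forall_digit_eq (hb : 1 < b) {m₁ m₂ : ℕ} (h : ∀ i, digit b i m₁ = digit b i m₂) :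
    m₁ = m₂ := by
  rcases Nat.eq_zero_or_pos (m₁ + m₂) with h0 | hpos
  · omega
  have hdiv : m₁ / b = m₂ / b :=
    eq_of_forall_digit_eq hb fun i => by simpa only [digit_div] using h (i + 1)
  have hmod : m₁ % b = m₂ % b := by simpa only [digit_zero_left] using h 0
  rw [← Nat.div_add_mod m₁ b, ← Nat.div_add_mod m₂ b, hdiv, hmod]
termination_by m₁ + m₂
decreasing_by
  rcases Nat.eq_zero_or_pos m₁ with h1 | h1
  · subst h1; simpa using Nat.div_lt_self (by omega) hb
  · have := Nat.div_lt_self h1 hb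
    have := Nat.div_le_self m₂ b
    omega

lemma bdelta_eq_mod_add_bdelta_div (hb : 1 < b) (m : ℕ) :
    bdelta b m = m % b + bdelta b (m / b) := by
  rcases eq_or_ne m 0 with rfl | hm
  · simp [bdelta]
  · rw [bdelta, Nat.digits_eq_cons_digits_div hb hm, List.sum_cons, bdelta]

lemma bdelta_eq_sum_range (hb : 1 < b) {K m : ℕ} (hm : m < b ^ K) :
    bdelta b m = ∑ i ∈ range K, digit b i m := by
  induction K generalizing m with
  | zero => simp_all [bdelta]
  | succ K ih =>
    have hdiv : m / b < b ^ K := Nat.div_lt_of_lt_mul (by rwa [← pow_succ'])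
    rw [bdelta_eq_mod_add_bdelta_div hb, ih hdiv, sum_range_succ', digit_zero_left, add_comm]
    simp only [digit_div]

lemma mem_digitSet (hb : 1 < b) {i m : ℕ} : i ∈ digitSet b m ↔ digit b i m ≠ 0 := by
  refine ⟨fun h => (mem_filter.1 h).2, fun h => mem_filter.2 ⟨mem_range.2 ?_, h⟩⟩
  by_contra hi
  exact h (digit_eq_zero_of_lt_pow ((Nat.lt_pow_self hb).trans_le' (by omega)))

lemma bdelta_eq_sum_digitSet (hb : 1 < b) (m : ℕ) :
    bdelta b m = ∑ i ∈ digitSet b m, digit b i m :=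
  (bdelta_eq_sum_range hb
    ((Nat.lt_pow_self hb).trans (Nat.pow_lt_pow_right hb m.lt_succ_self))).trans
      (sum_filter_ne_zero _).symm

theorem eq_of_digit_eq_of_ne (hb : 1 < b) {t m₁ m₂ : ℕ} (h : ∀ i ≠ t, digit b i m₁ = digit b i m₂)
    (hδ : bdelta b m₁ % b = bdelta b m₂ % b) : m₁ = m₂ := by
  obtain ⟨K, hK₁, hK₂, htK⟩ : ∃ K, m₁ < b ^ K ∧ m₂ < b ^ K ∧ t ∈ range K :=
    ⟨m₁ + m₂ + t + 1, (Nat.lt_pow_self hb).trans_le' (by omega),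
      (Nat.lt_pow_self hb).trans_le' (by omega), mem_range.2 (by omega)⟩
  have hrest : ∑ i ∈ (range K).erase t, digit b i m₁ = ∑ i ∈ (range K).erase t, digit b i m₂ :=
    sum_congr rfl fun i hi => h i (ne_of_mem_erase hi)
  have ht : digit b t m₁ = digit b t m₂ := by
    rw [bdelta_eq_sum_range hb hK₁, bdelta_eq_sum_range hb hK₂, ← add_sum_erase _ _ htK,
      ← add_sum_erase _ _ htK, hrest] at hδ
    have := Nat.ModEq.add_right_cancel' _ hδ
    rwa [Nat.ModEq, Nat.mod_eq_of_lt (digit_lt (by omega) t m₁),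
      Nat.mod_eq_of_lt (digit_lt (by omega) t m₂)] at this
  exact eq_of_forall_digit_eq hb fun i => (eq_or_ne i t).elim (· ▸ ht) (h i)

lemma two_le_card_digitSet (hb : 1 < b) {m : ℕ} (hm : ebMem b m) : 2 ≤ #(digitSet b m) := by
  by_contra! h
  obtain ⟨p, hp⟩ := card_le_one_iff_subset_singleton.1 (Nat.le_of_lt_succ h)
  rcases subset_singleton_iff.1 hp with hD | hD
  · refine hm.1 (eq_of_forall_digit_eq hb fun i => ?_)
    rw [digit_zero_right]
    by_contra hi
    simpa [hD] using (mem_digitSet hb).2 hi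
  · have hp : digit b p m ≠ 0 := (mem_digitSet hb).1 (hD ▸ mem_singleton_self p)
    have := hm.2
    rw [bdelta_eq_sum_digitSet hb, hD, sum_singleton,
      Nat.mod_eq_of_lt (digit_lt (by omega) p m)] at this
    exact hp this

section Largest

variable {ι : Type*} [LinearOrder ι]

def largest (α : ℕ) (D : Finset ι) : Finset ι := {i ∈ D | #{j ∈ D | i < j} < α}

variable {α : ℕ} {D : Finset ι}

lemma largest_subset : largest α D ⊆ D := filter_subset _ _

lemma mem_largest_of_lt {i j : ι} (hi : i ∈ largest α D) (hj : j ∈ D) (hij : i < j) :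
    j ∈ largest α D := by
  refine mem_filter.2 ⟨hj, lt_of_le_of_lt (card_le_card fun k hk => ?_) (mem_filter.1 hi).2⟩
  exact mem_filter.2 ⟨(mem_filter.1 hk).1, hij.trans (mem_filter.1 hk).2⟩

lemma largest_insert_of_forall_lt {a : ι} (ha : ∀ x ∈ D, a < x) :
    largest α (insert a D) = if #D < α then insert a (largest α D) else largest α D := by
  have hself : {j ∈ insert a D | a < j} = D := by
    rw [filter_insert, if_neg (lt_irrefl a)]
    exact filter_true_of_mem ha
  have hrest : ∀ i ∈ D, {j ∈ insert a D | i < j} = {j ∈ D | i < j} := fun i hi => by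
    rw [filter_insert, if_neg (ha i hi).not_gt]
  rw [largest, filter_insert, hself, filter_congr fun i hi => by rw [hrest i hi]]
  rfl

lemma card_largest : #(largest α D) = min #D α := by
  induction D using Finset.induction_on_min with
  | empty => simp [largest]
  | insert a D ha ih =>
    have haD : a ∉ D := fun h => lt_irrefl a (ha a h)
    rw [largest_insert_of_forall_lt ha, card_insert_of_notMem haD]
    split_ifs with hD
    · rw [card_insert_of_notMem fun h => haD (largest_subset h), ih]
      omega
    · omega

lemma largest_eq_self_of_card_lt (h : #(largest α D) < α) : largest α D = D := by
  rw [card_largest] at h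
  exact eq_of_subset_of_card_le largest_subset (by rw [card_largest]; omega)

end Largest

def weight (T : Finset ℕ) : ℕ := ∑ p ∈ T, (p + 1)

lemma mua_eq_weight (b α m : ℕ) : mua b α m = weight (largest α (digitSet b m)) := rfl

lemma weight_eq_add_weight_erase {T : Finset ℕ} {q : ℕ} (hq : q ∈ T) :
    weight T = (q + 1) + weight (T.erase q) :=
  (add_sum_erase T _ hq).symm

lemma sum_pow_sub_le {y : ℝ} (hy₀ : 0 ≤ y) (hy₁ : y < 1) {Q : Finset ℕ} {M : ℕ}
    (hQ : ∀ q ∈ Q, M ≤ q) : ∑ q ∈ Q, y ^ (q - M) ≤ (1 - y)⁻¹ := by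
  have hinj : Set.InjOn (· - M) Q := fun q hq q' hq' h => by
    have := hQ q hq; have := hQ q' hq'; simp only at h; omega
  rw [← sum_image hinj, ← tsum_geometric_of_lt_one hy₀ hy₁]
  exact (summable_geometric_of_lt_one hy₀ hy₁).sum_le_tsum _ fun j _ => pow_nonneg hy₀ j

/-- The generating function of partitions into `v` distinct parts. -/
def distinctPartsGF (x : ℝ) (v : ℕ) : ℝ := ∏ i ∈ Icc 1 v, x ^ i / (1 - x ^ i)

lemma distinctPartsGF_nonneg {x : ℝ} (hx₀ : 0 ≤ x) (hx₁ : x < 1) (v : ℕ) :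
    0 ≤ distinctPartsGF x v :=
  prod_nonneg fun i _ => div_nonneg (pow_nonneg hx₀ i)
    (sub_nonneg.2 (pow_le_one₀ hx₀ hx₁.le))

lemma distinctPartsGF_succ (x : ℝ) (v : ℕ) :
    distinctPartsGF x (v + 1) = distinctPartsGF x v * (x ^ (v + 1) / (1 - x ^ (v + 1))) := by
  rw [distinctPartsGF, distinctPartsGF, ← prod_Icc_succ_top (by omega)]

lemma sum_mul_pow_weight_le_of_sInf {x : ℝ} (hx : 0 ≤ x) {v : ℕ} {g B : ℕ → ℝ}
    (hg : ∀ q, 0 ≤ g q)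
    (hB : ∀ q (G : Finset (Finset ℕ)), (∀ T ∈ G, #T = v ∧ ∀ p ∈ T, q + 1 ≤ p) →
      ∑ T ∈ G, x ^ weight T ≤ B q)
    {F : Finset (Finset ℕ)} (hF : ∀ T ∈ F, #T = v + 1) :
    ∑ T ∈ F, g (sInf (T : Set ℕ)) * x ^ weight T
      ≤ ∑ q ∈ F.image (fun T : Finset ℕ => sInf (T : Set ℕ)), g q * x ^ (q + 1) * B q := by
  rw [← sum_fiberwise_of_maps_to fun T hT =>
    mem_image_of_mem (fun T : Finset ℕ => sInf (T : Set ℕ)) hT]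
  refine sum_le_sum fun q _ => ?_
  set Fq := F.filter fun T : Finset ℕ => sInf (T : Set ℕ) = q
  have hmem : ∀ T ∈ Fq, q ∈ T ∧ ∀ p ∈ T, q ≤ p := fun T hT => by
    obtain ⟨hTF, rfl⟩ := mem_filter.1 hT
    have hne : (T : Set ℕ).Nonempty := coe_nonempty.2 (card_pos.1 (by rw [hF T hTF]; omega))
    exact ⟨Nat.sInf_mem hne, fun p hp => Nat.sInf_le hp⟩
  have hinj : Set.InjOn (fun T : Finset ℕ => T.erase q) Fq := fun T₁ h₁ T₂ h₂ h => by
    rw [← insert_erase (hmem T₁ h₁).1, ← insert_erase (hmem T₂ h₂).1]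
    exact congrArg (insert q) h
  calc ∑ T ∈ Fq, g (sInf (T : Set ℕ)) * x ^ weight T
      = g q * x ^ (q + 1) * ∑ T ∈ Fq.image (fun T : Finset ℕ => T.erase q), x ^ weight T := by
        rw [sum_image hinj, mul_sum]
        refine sum_congr rfl fun T hT => ?_
        rw [(mem_filter.1 hT).2, weight_eq_add_weight_erase (hmem T hT).1, pow_add, mul_assoc]
    _ ≤ g q * x ^ (q + 1) * B q := by
        refine mul_le_mul_of_nonneg_left (hB q _ fun T' hT' => ?_) (by positivity [hg q])
        obtain ⟨T, hT, rfl⟩ := mem_image.1 hT'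
        refine ⟨by rw [card_erase_of_mem (hmem T hT).1, hF T (mem_filter.1 hT).1]; rfl,
          fun p hp => ?_⟩
        have := (hmem T hT).2 p (mem_of_mem_erase hp)
        have := ne_of_mem_erase hp
        omega

lemma pow_mul_pow_eq_pow_add {x : ℝ} {v M q : ℕ} (hq : M ≤ q) :
    x ^ (q + 1) * x ^ (v * (q + 1)) = (x ^ (v + 1)) ^ (M + 1) * (x ^ (v + 1)) ^ (q - M) := by
  obtain ⟨d, rfl⟩ := Nat.exists_eq_add_of_le hq
  rw [Nat.add_sub_cancel_left, ← pow_add, ← pow_add, ← pow_mul]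
  congr 1
  ring

theorem sum_pow_weight_le {x : ℝ} (hx₀ : 0 ≤ x) (hx₁ : x < 1) (v M : ℕ)
    {F : Finset (Finset ℕ)} (hF : ∀ T ∈ F, #T = v ∧ ∀ p ∈ T, M ≤ p) :
    ∑ T ∈ F, x ^ weight T ≤ distinctPartsGF x v * x ^ (v * M) := by
  induction v generalizing M F with
  | zero =>
    have hF' : F ⊆ {∅} := fun T hT => mem_singleton.2 (card_eq_zero.1 (hF T hT).1)
    calc ∑ T ∈ F, x ^ weight T ≤ ∑ T ∈ {∅}, x ^ weight T :=
          sum_le_sum_of_subset_of_nonneg hF' fun _ _ _ => pow_nonneg hx₀ _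
      _ = _ := by simp [weight, distinctPartsGF]
  | succ v ih =>
    set y := x ^ (v + 1)
    have hy₀ : 0 ≤ y := pow_nonneg hx₀ _
    have hy₁ : y < 1 := pow_lt_one₀ hx₀ hx₁ (by omega)
    set Q := F.image fun T : Finset ℕ => sInf (T : Set ℕ)
    have hQ : ∀ q ∈ Q, M ≤ q := fun q hq => by
      obtain ⟨T, hT, rfl⟩ := mem_image.1 hq
      exact (hF T hT).2 _ (Nat.sInf_mem (coe_nonempty.2 (card_pos.1 (by rw [(hF T hT).1]; omega))))
    calc ∑ T ∈ F, x ^ weight T = ∑ T ∈ F, 1 * x ^ weight T := by simp only [one_mul]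
      _ ≤ ∑ q ∈ Q, 1 * x ^ (q + 1) * (distinctPartsGF x v * x ^ (v * (q + 1))) :=
          sum_mul_pow_weight_le_of_sInf (g := fun _ => 1) hx₀ (fun _ => zero_le_one)
            (fun q _ hG => ih (q + 1) hG) fun T hT => (hF T hT).1
      _ = y ^ (M + 1) * distinctPartsGF x v * ∑ q ∈ Q, y ^ (q - M) := by
          rw [mul_sum]
          refine sum_congr rfl fun q hq => ?_
          linear_combination
            distinctPartsGF x v * pow_mul_pow_eq_pow_add (x := x) (v := v) (hQ q hq)
      _ ≤ y ^ (M + 1) * distinctPartsGF x v * (1 - y)⁻¹ :=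
          mul_le_mul_of_nonneg_left (sum_pow_sub_le hy₀ hy₁ hQ)
            (mul_nonneg (pow_nonneg hy₀ _) (distinctPartsGF_nonneg hx₀ hx₁ v))
      _ = distinctPartsGF x (v + 1) * x ^ ((v + 1) * M) := by
          rw [distinctPartsGF_succ, pow_mul]
          ring

theorem sum_pow_sInf_mul_pow_weight_le {x c : ℝ} (hx₀ : 0 ≤ x) (hx₁ : x < 1) (hc : 0 ≤ c)
    {v : ℕ} (hcx : c * x ^ (v + 1) < 1) (M : ℕ) {F : Finset (Finset ℕ)}
    (hF : ∀ T ∈ F, #T = v + 1 ∧ ∀ p ∈ T, M ≤ p) :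
    ∑ T ∈ F, c ^ (sInf (T : Set ℕ) - M) * x ^ weight T
      ≤ distinctPartsGF x v / (1 - c * x ^ (v + 1)) * x ^ ((v + 1) * (M + 1)) := by
  set y := x ^ (v + 1)
  set Q := F.image fun T : Finset ℕ => sInf (T : Set ℕ)
  have hQ : ∀ q ∈ Q, M ≤ q := fun q hq => by
    obtain ⟨T, hT, rfl⟩ := mem_image.1 hq
    exact (hF T hT).2 _ (Nat.sInf_mem (coe_nonempty.2 (card_pos.1 (by rw [(hF T hT).1]; omega))))
  calc ∑ T ∈ F, c ^ (sInf (T : Set ℕ) - M) * x ^ weight T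
      ≤ ∑ q ∈ Q, c ^ (q - M) * x ^ (q + 1) * (distinctPartsGF x v * x ^ (v * (q + 1))) :=
        sum_mul_pow_weight_le_of_sInf (g := fun q => c ^ (q - M)) hx₀ (fun _ => pow_nonneg hc _)
          (fun q _ hG => sum_pow_weight_le hx₀ hx₁ v (q + 1) hG) fun T hT => (hF T hT).1
    _ = y ^ (M + 1) * distinctPartsGF x v * ∑ q ∈ Q, (c * y) ^ (q - M) := by
        rw [mul_sum]
        refine sum_congr rfl fun q hq => ?_
        rw [mul_pow]
        linear_combination
          c ^ (q - M) * distinctPartsGF x v * pow_mul_pow_eq_pow_add (x := x) (v := v) (hQ q hq)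
    _ ≤ y ^ (M + 1) * distinctPartsGF x v * (1 - c * y)⁻¹ :=
        mul_le_mul_of_nonneg_left (sum_pow_sub_le (by positivity) hcx hQ)
          (mul_nonneg (by positivity) (distinctPartsGF_nonneg hx₀ hx₁ v))
    _ = distinctPartsGF x v / (1 - c * y) * x ^ ((v + 1) * (M + 1)) := by
        rw [pow_mul, div_eq_mul_inv]
        ring

lemma le_of_mem_largest_digitSet (hb : 1 < b) {α N m p : ℕ} (hm : b ^ N ∣ m)
    (hp : p ∈ largest α (digitSet b m)) : N ≤ p := by
  by_contra! h
  exact (mem_digitSet hb).1 (largest_subset hp) (digit_eq_zero_of_pow_dvd hm h)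

lemma digit_eq_zero_of_notMem_largest (hb : 1 < b) {α m t p : ℕ}
    (ht : t ∈ largest α (digitSet b m)) (htp : t < p) (hp : p ∉ largest α (digitSet b m)) :
    digit b p m = 0 := by
  by_contra h
  exact hp (mem_largest_of_lt ht ((mem_digitSet hb).2 h) htp)

/-- The digit at `t` is fixed by the others through the digit sum, so `m` is determined by its
digits on `T \ {t}` (nonzero) and on `[N, t)`. -/
theorem card_le_of_largest_digitSet_eq (hb : 1 < b) {α N t : ℕ} {T : Finset ℕ} (ht : t ∈ T)
    {F : Finset ℕ} (hF : ∀ m ∈ F, bdelta b m % b = 0 ∧ largest α (digitSet b m) = T ∧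
      ∀ i < N, digit b i m = 0) :
    #F ≤ (b - 1) ^ (#T - 1) * b ^ (t - N) := by
  set P := ((T.erase t).pi fun _ => Ioo 0 b) ×ˢ ((Ico N t).pi fun _ => range b)
  have hP : #P = (b - 1) ^ (#T - 1) * b ^ (t - N) := by
    simp [P, card_pi, card_erase_of_mem ht]
  rw [← hP]
  refine card_le_card_of_injOn (fun m => (fun p _ => digit b p m, fun p _ => digit b p m))
    (fun m hm => ?_) (fun m₁ h₁ m₂ h₂ h => ?_)
  · obtain ⟨-, hT, -⟩ := hF m hm
    simp only [P, coe_product, Set.mem_prod, mem_coe, mem_pi, mem_Ioo, mem_range]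
    refine ⟨fun p hp => ⟨Nat.pos_of_ne_zero ((mem_digitSet hb).1 ?_), digit_lt (by omega) _ _⟩,
      fun p _ => digit_lt (by omega) _ _⟩
    exact largest_subset (hT ▸ mem_of_mem_erase hp)
  · obtain ⟨hδ₁, hT₁, hN₁⟩ := hF m₁ h₁
    obtain ⟨hδ₂, hT₂, hN₂⟩ := hF m₂ h₂
    simp only [Prod.mk.injEq] at h
    refine eq_of_digit_eq_of_ne hb (t := t) (fun p hpt => ?_) (by rw [hδ₁, hδ₂])
    rcases lt_or_gt_of_ne hpt with hlt | hgt
    · by_cases hpN : p < N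
      · rw [hN₁ p hpN, hN₂ p hpN]
      · exact congrFun (congrFun h.2 p) (mem_Ico.2 ⟨not_lt.1 hpN, hlt⟩)
    · by_cases hpT : p ∈ T
      · exact congrFun (congrFun h.1 p) (mem_erase.2 ⟨hpt, hpT⟩)
      · rw [digit_eq_zero_of_notMem_largest hb (hT₁ ▸ ht) hgt (hT₁ ▸ hpT),
          digit_eq_zero_of_notMem_largest hb (hT₂ ▸ ht) hgt (hT₂ ▸ hpT)]

lemma sum_comp_le_of_card_fiber_le {ι κ : Type*} [DecidableEq κ] {S : Finset ι} {g : ι → κ}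
    {f c : κ → ℝ} (hf : ∀ T, 0 ≤ f T) (hc : ∀ T ∈ S.image g, (#{m ∈ S | g m = T} : ℝ) ≤ c T) :
    ∑ m ∈ S, f (g m) ≤ ∑ T ∈ S.image g, c T * f T := by
  rw [sum_comp]
  exact sum_le_sum fun T hT => by
    rw [nsmul_eq_mul]
    exact mul_le_mul_of_nonneg_right (hc T hT) (hf T)

theorem sum_pow_mua_le_of_card_lt (hb : 1 < b) {α N v : ℕ} (hv : v < α) {x : ℝ} (hx₀ : 0 ≤ x)
    (hx₁ : x < 1) {S : Finset ℕ} (hS : ∀ m ∈ S, ebMem b m ∧ b ^ N ∣ m) :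
    ∑ m ∈ S with #(largest α (digitSet b m)) = v, x ^ mua b α m
      ≤ (b - 1 : ℝ) ^ (v - 1) * distinctPartsGF x v * x ^ (v * N) := by
  set Sv := {m ∈ S | #(largest α (digitSet b m)) = v}
  have hSv : ∀ m ∈ Sv, ebMem b m ∧ b ^ N ∣ m ∧ digitSet b m = largest α (digitSet b m) ∧
      #(largest α (digitSet b m)) = v := fun m hm => by
    obtain ⟨hmS, hmv⟩ := mem_filter.1 hm
    exact ⟨(hS m hmS).1, (hS m hmS).2, (largest_eq_self_of_card_lt (hmv ▸ hv)).symm, hmv⟩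
  have hcount : ∀ T ∈ Sv.image (fun m => largest α (digitSet b m)),
      (#{m ∈ Sv | largest α (digitSet b m) = T} : ℝ) ≤ (b - 1 : ℝ) ^ (v - 1) := by
    intro T hT
    obtain ⟨m₀, hm₀, rfl⟩ := mem_image.1 hT
    obtain ⟨hm₀E, -, hD₀, hv₀⟩ := hSv m₀ hm₀
    have hne : (largest α (digitSet b m₀) : Set ℕ).Nonempty := by
      rw [← hD₀, coe_nonempty, ← card_pos]
      have := two_le_card_digitSet hb hm₀E
      omega
    -- here `digitSet b m = T`, so all digits below `t = sInf T` vanish: count with `N := t`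
    have hcard := card_le_of_largest_digitSet_eq hb (N := sInf _) (Nat.sInf_mem hne)
      (F := {m ∈ Sv | largest α (digitSet b m) = largest α (digitSet b m₀)}) fun m hm => by
        obtain ⟨hmSv, hmT⟩ := mem_filter.1 hm
        obtain ⟨hmE, -, hD, -⟩ := hSv m hmSv
        refine ⟨hmE.2, hmT, fun i hi => not_not.1 fun hi' => ?_⟩
        have : i ∈ largest α (digitSet b m₀) := hmT ▸ hD ▸ (mem_digitSet hb).2 hi'
        exact (Nat.sInf_le (mem_coe.2 this)).not_gt hi
    rw [Nat.sub_self, pow_zero, mul_one, hv₀] at hcard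
    rw [← Nat.cast_pred (by omega)]
    exact_mod_cast hcard
  simp only [mua_eq_weight]
  calc ∑ m ∈ Sv, x ^ weight (largest α (digitSet b m))
      ≤ ∑ T ∈ Sv.image (fun m => largest α (digitSet b m)), (b - 1 : ℝ) ^ (v - 1) * x ^ weight T :=
        sum_comp_le_of_card_fiber_le (f := fun T => x ^ weight T) (fun _ => pow_nonneg hx₀ _) hcount
    _ ≤ (b - 1 : ℝ) ^ (v - 1) * distinctPartsGF x v * x ^ (v * N) := by
        rw [← mul_sum, mul_assoc]
        refine mul_le_mul_of_nonneg_left (sum_pow_weight_le hx₀ hx₁ v N fun T hT => ?_)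
          (pow_nonneg (by simp [hb.le]) _)
        obtain ⟨m, hm, rfl⟩ := mem_image.1 hT
        exact ⟨(hSv m hm).2.2.2, fun p hp => le_of_mem_largest_digitSet hb (hSv m hm).2.1 hp⟩

theorem sum_pow_mua_le_of_card_eq (hb : 1 < b) {α N : ℕ} (hα : 1 ≤ α) {x : ℝ} (hx₀ : 0 ≤ x)
    (hx₁ : x < 1) (hbx : b * x ^ α < 1) {S : Finset ℕ} (hS : ∀ m ∈ S, ebMem b m ∧ b ^ N ∣ m) :
    ∑ m ∈ S with #(largest α (digitSet b m)) = α, x ^ mua b α m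
      ≤ (b - 1 : ℝ) ^ (α - 1) * distinctPartsGF x (α - 1) / (1 - b * x ^ α)
          * x ^ (α * (N + 1)) := by
  set Sα := {m ∈ S | #(largest α (digitSet b m)) = α}
  have hSα : ∀ m ∈ Sα, ebMem b m ∧ b ^ N ∣ m ∧ #(largest α (digitSet b m)) = α := fun m hm => by
    obtain ⟨hmS, hmα⟩ := mem_filter.1 hm
    exact ⟨(hS m hmS).1, (hS m hmS).2, hmα⟩
  have hcount : ∀ T ∈ Sα.image (fun m => largest α (digitSet b m)),
      (#{m ∈ Sα | largest α (digitSet b m) = T} : ℝ)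
        ≤ (b - 1 : ℝ) ^ (α - 1) * (b : ℝ) ^ (sInf (T : Set ℕ) - N) := by
    intro T hT
    obtain ⟨m₀, hm₀, rfl⟩ := mem_image.1 hT
    have hne : (largest α (digitSet b m₀) : Set ℕ).Nonempty := by
      rw [coe_nonempty, ← card_pos, (hSα m₀ hm₀).2.2]
      omega
    have hcard := card_le_of_largest_digitSet_eq hb (N := N) (Nat.sInf_mem hne)
      (F := {m ∈ Sα | largest α (digitSet b m) = largest α (digitSet b m₀)}) fun m hm => by
        obtain ⟨hmSα, hmT⟩ := mem_filter.1 hm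
        obtain ⟨hmE, hmN, -⟩ := hSα m hmSα
        exact ⟨hmE.2, hmT, fun i hi => digit_eq_zero_of_pow_dvd hmN hi⟩
    rw [(hSα m₀ hm₀).2.2] at hcard
    rw [← Nat.cast_pred (by omega)]
    exact_mod_cast hcard
  simp only [mua_eq_weight]
  calc ∑ m ∈ Sα, x ^ weight (largest α (digitSet b m))
      ≤ ∑ T ∈ Sα.image (fun m => largest α (digitSet b m)),
          (b - 1 : ℝ) ^ (α - 1) * (b : ℝ) ^ (sInf (T : Set ℕ) - N) * x ^ weight T :=
        sum_comp_le_of_card_fiber_le (f := fun T => x ^ weight T) (fun _ => pow_nonneg hx₀ _) hcount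
    _ ≤ (b - 1 : ℝ) ^ (α - 1) * distinctPartsGF x (α - 1) / (1 - b * x ^ α)
          * x ^ (α * (N + 1)) := by
        simp only [mul_assoc, ← mul_sum]
        rw [mul_div_assoc, mul_assoc]
        refine mul_le_mul_of_nonneg_left ?_ (pow_nonneg (by simp [hb.le]) _)
        have hbx' : (b : ℝ) * x ^ (α - 1 + 1) < 1 := by rwa [Nat.sub_add_cancel hα]
        have := sum_pow_sInf_mul_pow_weight_le hx₀ hx₁ (Nat.cast_nonneg b) hbx' N
          (F := Sα.image fun m => largest α (digitSet b m)) fun T hT => by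
            obtain ⟨m, hm, rfl⟩ := mem_image.1 hT
            exact ⟨(hSα m hm).2.2.trans (Nat.sub_add_cancel hα).symm,
              fun p hp => le_of_mem_largest_digitSet hb (hSα m hm).2.1 hp⟩
        rwa [Nat.sub_add_cancel hα] at this

lemma pow_le_pow_div_pow {x : ℝ} (hx₀ : 0 < x) (hx₁ : x ≤ 1) {v N : ℕ} (hv : 2 ≤ v) :
    x ^ (v * N) ≤ x ^ (2 * (N + 1)) / x ^ v := by
  rw [le_div_iff₀ (pow_pos hx₀ v), ← pow_add]
  exact pow_le_pow_of_le_one hx₀.le hx₁ (by nlinarith)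

theorem sum_pow_mua_le (hb : 1 < b) {α N : ℕ} (hα : 2 ≤ α) {x : ℝ} (hx₀ : 0 < x) (hx₁ : x < 1)
    (hbx : b * x ^ α < 1) {S : Finset ℕ} (hS : ∀ m ∈ S, ebMem b m ∧ b ^ N ∣ m) :
    ∑ m ∈ S, x ^ mua b α m
      ≤ (∑ v ∈ Icc 2 (α - 1), (b - 1 : ℝ) ^ (v - 1) * distinctPartsGF x v / x ^ v
        + (b - 1 : ℝ) ^ (α - 1) * distinctPartsGF x (α - 1) / (1 - b * x ^ α))
          * x ^ (2 * (N + 1)) := by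
  have hmaps : ∀ m ∈ S, #(largest α (digitSet b m)) ∈ Icc 2 α := fun m hm => by
    have := two_le_card_digitSet hb (hS m hm).1
    rw [mem_Icc, card_largest]
    omega
  have hIcc : Icc 2 α = insert α (Icc 2 (α - 1)) := by
    ext v
    simp only [mem_Icc, mem_insert]
    omega
  have hb₁ : (0 : ℝ) ≤ b - 1 := sub_nonneg.2 (by exact_mod_cast hb.le)
  have hG := distinctPartsGF_nonneg hx₀.le hx₁
  rw [← sum_fiberwise_of_maps_to hmaps, hIcc, sum_insert (by rw [mem_Icc]; omega), add_comm,
    add_mul, sum_mul]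
  refine add_le_add (sum_le_sum fun v hv => ?_) ?_
  · rw [mem_Icc] at hv
    refine (sum_pow_mua_le_of_card_lt hb (by omega) hx₀.le hx₁ hS).trans ?_
    rw [div_mul_eq_mul_div, mul_div_assoc]
    exact mul_le_mul_of_nonneg_left (pow_le_pow_div_pow hx₀ hx₁.le hv.1)
      (mul_nonneg (pow_nonneg hb₁ _) (hG v))
  · refine (sum_pow_mua_le_of_card_eq hb (by omega) hx₀.le hx₁ hbx hS).trans ?_
    refine mul_le_mul_of_nonneg_left (pow_le_pow_of_le_one hx₀.le hx₁.le (by nlinarith))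
      (div_nonneg (mul_nonneg (pow_nonneg hb₁ _) (hG _)) (sub_pos.2 hbx).le)

lemma Atwo_eq (hb : 1 < b) {α : ℕ} (hα : 1 ≤ α) {l x : ℝ} (hx : (b : ℝ) ^ (2 * l) = x⁻¹)
    (hx₀ : 0 < x) (hx₁ : x < 1) (hbx : b * x ^ α < 1) :
    Atwo b α l = ∑ v ∈ Icc 2 (α - 1), (b - 1 : ℝ) ^ (v - 1) * distinctPartsGF x v / x ^ v
      + (b - 1 : ℝ) ^ (α - 1) * distinctPartsGF x (α - 1) / (1 - b * x ^ α) := by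
  have hprod : ∀ v : ℕ, ∏ i ∈ Icc 1 v,
      ((b : ℝ) ^ (2 * l) * ((b : ℝ) - 1) / ((b : ℝ) ^ (2 * l * (i : ℝ)) - 1))
        = ((b : ℝ) - 1) ^ v * distinctPartsGF x v / x ^ v := by
    intro v
    have hfactor : ∀ i ∈ Icc 1 v,
        (b : ℝ) ^ (2 * l) * ((b : ℝ) - 1) / ((b : ℝ) ^ (2 * l * (i : ℝ)) - 1)
          = ((b : ℝ) - 1) / x * (x ^ i / (1 - x ^ i)) := fun i hi => by
      have hxi : x ^ i < 1 := pow_lt_one₀ hx₀.le hx₁ (by rw [mem_Icc] at hi; omega)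
      have hxi' : (x ^ i)⁻¹ - 1 ≠ 0 := sub_ne_zero.2 (one_lt_inv₀ (by positivity) |>.2 hxi).ne'
      rw [Real.rpow_mul (Nat.cast_nonneg b) (2 * l) i, hx, Real.rpow_natCast, inv_pow]
      field_simp [hxi.ne', hxi']
    rw [prod_congr rfl hfactor, prod_mul_distrib, prod_const, Nat.card_Icc, Nat.add_sub_cancel,
      div_pow, distinctPartsGF]
    ring
  obtain ⟨β, rfl⟩ := Nat.exists_eq_add_of_le' hα
  simp only [Atwo, hprod, Nat.add_sub_cancel]
  congr 1
  · rw [mul_sum]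
    refine sum_congr rfl fun v hv => ?_
    obtain ⟨w, rfl⟩ := Nat.exists_eq_add_of_le' (by rw [mem_Icc] at hv; omega : 1 ≤ v)
    have hb₁ : (b : ℝ) - 1 ≠ 0 := sub_ne_zero.2 (by exact_mod_cast hb.ne')
    rw [pow_succ, Nat.add_sub_cancel]
    field_simp
  · have hden : 1 - (b : ℝ) * x ^ (β + 1) ≠ 0 := (sub_pos.2 hbx).ne'
    have hden' : (x ^ (β + 1))⁻¹ - b ≠ 0 := by
      rw [inv_eq_one_div, div_sub' (by positivity)]
      exact div_ne_zero (by rwa [mul_comm]) (by positivity)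
    rw [Real.rpow_mul (Nat.cast_nonneg b) (2 * l) (β + 1 : ℕ), hx, Real.rpow_natCast, inv_pow]
    field_simp
    ring

lemma ebMem_div_of_pow_succ_dvd (hb : 1 < b) {N k : ℕ} (hk : ebMem b k) (hN : b ^ (N + 1) ∣ k) :
    ebMem b (k / b) ∧ b ^ N ∣ k / b := by
  have hbk : b ∣ k := (dvd_pow_self b N.succ_ne_zero).trans hN
  refine ⟨⟨(Nat.div_pos (Nat.le_of_dvd (Nat.pos_of_ne_zero hk.1) hbk) (by omega)).ne', ?_⟩,
    Nat.dvd_div_of_mul_dvd (by rwa [← pow_succ'])⟩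
  rw [← hk.2, bdelta_eq_mod_add_bdelta_div hb k, Nat.mod_eq_zero_of_dvd hbk, zero_add]

theorem sum_pow_mua_div_le (hb : 1 < b) {α N : ℕ} (hα : 2 ≤ α) {x : ℝ} (hx₀ : 0 < x)
    (hx₁ : x < 1) (hbx : b * x ^ α < 1) (s : Finset {k : ℕ // ebMem b k ∧ b ^ (N + 1) ∣ k}) :
    ∑ k ∈ s, x ^ mua b α ((k : ℕ) / b)
      ≤ (∑ v ∈ Icc 2 (α - 1), (b - 1 : ℝ) ^ (v - 1) * distinctPartsGF x v / x ^ v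
        + (b - 1 : ℝ) ^ (α - 1) * distinctPartsGF x (α - 1) / (1 - b * x ^ α))
          * x ^ (2 * (N + 1)) := by
  have hdvd : ∀ k : {k : ℕ // ebMem b k ∧ b ^ (N + 1) ∣ k}, b ∣ k :=
    fun k => (dvd_pow_self b N.succ_ne_zero).trans k.2.2
  have hinj : Set.InjOn (fun k : {k : ℕ // ebMem b k ∧ b ^ (N + 1) ∣ k} => (k : ℕ) / b) s :=
    fun k₁ _ k₂ _ h => Subtype.ext <| (Nat.div_left_inj (hdvd k₁) (hdvd k₂)).1 h
  rw [← sum_image (f := fun m => x ^ mua b α m) hinj]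
  exact sum_pow_mua_le hb hα hx₀ hx₁ hbx fun m hm => by
    obtain ⟨k, -, rfl⟩ := mem_image.1 hm
    exact ebMem_div_of_pow_succ_dvd hb k.2.1 k.2.2

end Eb

open Eb

/-- **Lemma (second digit-sum bound).** Let `b` be prime, `α ≥ 2` an integer,
`λ > 1/(2α)` real and `n ≥ 1`. Then
`∑_{k ∈ E_b, b^n ∣ k} b^{-2λ μ_α(⌊k/b⌋)} ≤ A_{α,b,λ,2} / b^{4λn}`. -/
theorem eb_dvd_tsum_le_Atwo (b α n : ℕ) (hb : b.Prime) (hα : 2 ≤ α) (hn : 1 ≤ n)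
    (l : ℝ) (hl : 1 / (2 * α) < l) :
    ∑' k : {k : ℕ // ebMem b k ∧ b ^ n ∣ k},
        (b : ℝ) ^ (-(2 * l * (mua b α ((k : ℕ) / b) : ℝ)))
      ≤ Atwo b α l / (b : ℝ) ^ (4 * l * n) := by
  obtain ⟨N, rfl⟩ := Nat.exists_eq_add_of_le' hn
  have hb₁ : (1 : ℝ) < b := by exact_mod_cast hb.one_lt
  have h2lα : 1 < 2 * l * α := by
    rw [div_lt_iff₀ (by positivity)] at hl
    linarith
  set x : ℝ := (b : ℝ) ^ (-(2 * l))
  have hx_pow : ∀ μ : ℕ, (b : ℝ) ^ (-(2 * l * μ)) = x ^ μ := fun μ => by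
    rw [← Real.rpow_natCast, ← Real.rpow_mul (by positivity), neg_mul]
  have hx₀ : 0 < x := by positivity
  have hx₁ : x < 1 := Real.rpow_lt_one_of_one_lt_of_neg hb₁ (by nlinarith)
  have hbx : b * x ^ α < 1 := by
    rw [← hx_pow, ← Real.rpow_one_add' (by positivity) (by linarith)]
    exact Real.rpow_lt_one_of_one_lt_of_neg hb₁ (by linarith)
  have hx_inv : (b : ℝ) ^ (2 * l) = x⁻¹ := by
    simp only [x]
    rw [Real.rpow_neg (by positivity), inv_inv]
  have hden : (b : ℝ) ^ (4 * l * (N + 1 : ℕ)) = (x ^ (2 * (N + 1)))⁻¹ := by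
    rw [← hx_pow, Real.rpow_neg (by positivity), inv_inv]
    push_cast
    ring_nf
  rw [hden, div_inv_eq_mul, Atwo_eq hb.one_lt (by omega) hx_inv hx₀ hx₁ hbx]
  simp_rw [hx_pow]
  exact tsum_le_of_sum_le' (by simpa using sum_pow_mua_div_le hb.one_lt hα hx₀ hx₁ hbx ∅)
    (sum_pow_mua_div_le hb.one_lt hα hx₀ hx₁ hbx)
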